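/- arXiv:2501.19208 — 3 statements merged into one kernel-verified Lean document; each statement's English description precedes it below -/
import Mathlib

section
/- Let n ≥ 1, T ≥ 1, and let c = (c_{ij}) and l = (l_{ij}) be nonnegative. Let x₁ ∈ Δ_{n−1}, set y₀ := x₁, let y₁,…,y_T ∈ Δ_{n−1}, let d₁,…,d_T ∈ ℝ_{≥0}^n, and let P₁,…,P_T ∈ [0,1]^{n×n} be row-stochastic. Define x_{t+1} = (y_t − d_t)^+ + P_tᵀ min(y_t, d_t) for t = 1,…,T, where (·)^+ and min are taken componentwise. Then | ∑_{t=1}^T C̃(x_t, y_t, d_t, P_t) − ∑_{t=1}^T C̃(x_{t+1}, y_t, d_t, P_t) | ≤ 2 · (max_{i,j} c_{ij}) · ( 1 + ∑_{t=1}^T ‖y_t − y_{t−1}‖₁ ). -/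
/-- The repositioning cost `M_c(v)`: the minimum-cost network flow achieving net change `v`. -/
noncomputable def repoCost {n : ℕ} (c : Fin n → Fin n → ℝ) (v : Fin n → ℝ) : ℝ :=
  sInf {r : ℝ | ∃ ξ : Fin n → Fin n → ℝ, (∀ i j, 0 ≤ ξ i j) ∧
    (∀ j, (∑ i, ξ i j) - (∑ k, ξ j k) = v j) ∧ r = ∑ i, ∑ j, c i j * ξ i j}

/-- The ℓ¹ norm on `ℝ^n`. -/
def l1Norm {n : ℕ} (v : Fin n → ℝ) : ℝ := ∑ i, |v i|

/-- `P` is a row-stochastic matrix with entries in `[0,1]`. -/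
def RowStochastic {n : ℕ} (P : Fin n → Fin n → ℝ) : Prop :=
  (∀ i j, 0 ≤ P i j ∧ P i j ≤ 1) ∧ ∀ i, (∑ j, P i j) = 1

/-- The modified one-period cost
`C̃(x, y, d, P) = M_c(y − x) − ∑_{i,j} l_{ij} P_{ij} min(d_i, y_i)`. -/
noncomputable def Ctilde {n : ℕ} (c l : Fin n → Fin n → ℝ)
    (x y d : Fin n → ℝ) (P : Fin n → Fin n → ℝ) : ℝ :=
  repoCost c (fun i => y i - x i) - ∑ i, ∑ j, l i j * P i j * min (d i) (y i)


lemma posneg (a : ℝ) : max a 0 - max (-a) 0 = a := by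
  rcases le_total a 0 with h|h
  · rw [max_eq_right h, max_eq_left (by linarith)]; ring
  · rw [max_eq_left h, max_eq_right (by linarith)]; ring

lemma abs_posneg (a : ℝ) : |a| = max a 0 + max (-a) 0 := by
  rcases le_total a 0 with h|h
  · rw [abs_of_nonpos h, max_eq_right h, max_eq_left (by linarith)]; ring
  · rw [abs_of_nonneg h, max_eq_left h, max_eq_right (by linarith)]; ring

lemma feasible_exists {n : ℕ} (c : Fin n → Fin n → ℝ) (cmax : ℝ)
    (hcb : ∀ i j, c i j ≤ cmax) (v : Fin n → ℝ) (hv : ∑ i, v i = 0) :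
    ∃ ξ : Fin n → Fin n → ℝ, (∀ i j, 0 ≤ ξ i j) ∧
      (∀ j, (∑ i, ξ i j) - (∑ k, ξ j k) = v j) ∧
      ∑ i, ∑ j, c i j * ξ i j ≤ cmax * (l1Norm v / 2) := by
  set S : ℝ := ∑ i, max (v i) 0 with hS
  have h1 : ∑ i, (max (v i) 0 - max (-(v i)) 0) = 0 := by
    simp only [posneg]; exact hv
  rw [Finset.sum_sub_distrib] at h1
  have hSneg : (∑ i, max (-(v i)) 0) = S := by linarith
  have hl1 : l1Norm v = 2 * S := by
    unfold l1Norm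
    simp only [abs_posneg]
    rw [Finset.sum_add_distrib, hSneg]; ring
  have hSnonneg : 0 ≤ S := Finset.sum_nonneg fun i _ => le_max_right _ _
  rcases eq_or_lt_of_le hSnonneg with hS0 | hSpos
  · have hp : ∀ i : Fin n, max (v i) 0 = 0 := by
      intro i
      exact (Finset.sum_eq_zero_iff_of_nonneg (fun i _ => le_max_right _ _)).mp hS0.symm i
        (Finset.mem_univ i)
    have hm : ∀ i : Fin n, max (-(v i)) 0 = 0 := by
      have hz : ∑ i, max (-(v i)) 0 = 0 := by rw [hSneg, ← hS0]
      intro i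
      exact (Finset.sum_eq_zero_iff_of_nonneg (fun i _ => le_max_right _ _)).mp hz i
        (Finset.mem_univ i)
    have hvz : ∀ i, v i = 0 := by
      intro i
      have := posneg (v i)
      rw [hp i, hm i] at this; linarith
    refine ⟨fun _ _ => 0, fun i j => le_refl 0, fun j => by rw [hvz j]; simp, ?_⟩
    rw [hl1, ← hS0]
    simp
  · refine ⟨fun i j => max (v j) 0 * max (-(v i)) 0 / S, fun i j => by positivity, ?_, ?_⟩
    · intro j
      have hin : ∑ i, max (v j) 0 * max (-(v i)) 0 / S = max (v j) 0 := by
        rw [← Finset.sum_div, ← Finset.mul_sum, hSneg, mul_div_assoc, div_self hSpos.ne',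
          mul_one]
      have hout : ∑ k, max (v k) 0 * max (-(v j)) 0 / S = max (-(v j)) 0 := by
        rw [← Finset.sum_div, ← Finset.sum_mul, ← hS]
        field_simp
      rw [hin, hout]; exact posneg _
    · have key : ∑ i, ∑ j, max (v j) 0 * max (-(v i)) 0 = S * S := by
        have hrow : ∀ i : Fin n, ∑ j, max (v j) 0 * max (-(v i)) 0 = S * max (-(v i)) 0 :=
          fun i => by rw [← Finset.sum_mul]
        rw [Finset.sum_congr rfl fun i _ => hrow i, ← Finset.mul_sum, hSneg]
      calc ∑ i, ∑ j, c i j * (max (v j) 0 * max (-(v i)) 0 / S)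
          ≤ ∑ i, ∑ j, cmax * (max (v j) 0 * max (-(v i)) 0 / S) := by
            refine Finset.sum_le_sum fun i _ => Finset.sum_le_sum fun j _ => ?_
            exact mul_le_mul_of_nonneg_right (hcb i j) (by positivity)
        _ = (cmax / S) * ∑ i, ∑ j, max (v j) 0 * max (-(v i)) 0 := by
            rw [Finset.mul_sum]
            refine Finset.sum_congr rfl fun i _ => ?_
            rw [Finset.mul_sum]
            exact Finset.sum_congr rfl fun j _ => by ring
        _ = cmax * (l1Norm v / 2) := by
            rw [key, hl1]
            field_simp

lemma repo_bdd {n : ℕ} (c : Fin n → Fin n → ℝ) (hc : ∀ i j, 0 ≤ c i j) (v : Fin n → ℝ) :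
    BddBelow {r : ℝ | ∃ ξ : Fin n → Fin n → ℝ, (∀ i j, 0 ≤ ξ i j) ∧
      (∀ j, (∑ i, ξ i j) - (∑ k, ξ j k) = v j) ∧ r = ∑ i, ∑ j, c i j * ξ i j} := by
  refine ⟨0, ?_⟩
  rintro r ⟨ξ, hξ0, -, rfl⟩
  exact Finset.sum_nonneg fun i _ => Finset.sum_nonneg fun j _ => mul_nonneg (hc i j) (hξ0 i j)

lemma repo_nonneg {n : ℕ} (c : Fin n → Fin n → ℝ) (hc : ∀ i j, 0 ≤ c i j) (v : Fin n → ℝ) :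
    0 ≤ repoCost c v := by
  apply Real.sInf_nonneg
  rintro r ⟨ξ, hξ0, -, rfl⟩
  exact Finset.sum_nonneg fun i _ => Finset.sum_nonneg fun j _ => mul_nonneg (hc i j) (hξ0 i j)

lemma repo_le {n : ℕ} (c : Fin n → Fin n → ℝ) (cmax : ℝ) (hc : ∀ i j, 0 ≤ c i j)
    (hcb : ∀ i j, c i j ≤ cmax) (v : Fin n → ℝ) (hv : ∑ i, v i = 0) :
    repoCost c v ≤ cmax * (l1Norm v / 2) := by
  obtain ⟨ξ, h0, hfe, hcost⟩ := feasible_exists c cmax hcb v hv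
  exact le_trans (csInf_le (repo_bdd c hc v) ⟨ξ, h0, hfe, rfl⟩) hcost

lemma repo_lip {n : ℕ} (c : Fin n → Fin n → ℝ) (cmax : ℝ) (hc : ∀ i j, 0 ≤ c i j)
    (hcb : ∀ i j, c i j ≤ cmax) (w1 w2 : Fin n → ℝ)
    (h1 : ∑ i, w1 i = 0) (h2 : ∑ i, w2 i = 0) :
    repoCost c w2 ≤ repoCost c w1 + cmax * (l1Norm (fun i => w2 i - w1 i) / 2) := by
  obtain ⟨η, hη0, hηfe, hηcost⟩ := feasible_exists c cmax hcb (fun i => w2 i - w1 i)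
    (by rw [Finset.sum_sub_distrib, h1, h2]; ring)
  have hne : {r : ℝ | ∃ ξ : Fin n → Fin n → ℝ, (∀ i j, 0 ≤ ξ i j) ∧
      (∀ j, (∑ i, ξ i j) - (∑ k, ξ j k) = w1 j) ∧ r = ∑ i, ∑ j, c i j * ξ i j}.Nonempty := by
    obtain ⟨ξ, a, b, _⟩ := feasible_exists c cmax hcb w1 h1
    exact ⟨_, ξ, a, b, rfl⟩
  have key : repoCost c w2 - cmax * (l1Norm (fun i => w2 i - w1 i) / 2) ≤ repoCost c w1 := by
    unfold repoCost
    apply le_csInf hne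
    rintro r ⟨ξ, hξ0, hξfe, rfl⟩
    have hmem : (∑ i, ∑ j, c i j * (ξ i j + η i j)) ∈ {r : ℝ | ∃ ζ : Fin n → Fin n → ℝ,
        (∀ i j, 0 ≤ ζ i j) ∧ (∀ j, (∑ i, ζ i j) - (∑ k, ζ j k) = w2 j) ∧
        r = ∑ i, ∑ j, c i j * ζ i j} := by
      refine ⟨fun i j => ξ i j + η i j, fun i j => add_nonneg (hξ0 i j) (hη0 i j), ?_, rfl⟩
      intro j
      have hA := hξfe j
      have hB := hηfe j
      rw [Finset.sum_add_distrib, Finset.sum_add_distrib]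
      linarith
    have hle : repoCost c w2 ≤ ∑ i, ∑ j, c i j * (ξ i j + η i j) :=
      csInf_le (repo_bdd c hc w2) hmem
    have hsplit : ∑ i, ∑ j, c i j * (ξ i j + η i j)
        = (∑ i, ∑ j, c i j * ξ i j) + ∑ i, ∑ j, c i j * η i j := by
      rw [← Finset.sum_add_distrib]
      refine Finset.sum_congr rfl fun i _ => ?_
      rw [← Finset.sum_add_distrib]
      exact Finset.sum_congr rfl fun j _ => by ring
    rw [hsplit] at hle
    unfold repoCost at hle
    linarith
  linarith

lemma maxmin (a b : ℝ) : max (a - b) 0 + min a b = a := by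
  rcases le_total a b with h|h
  · rw [max_eq_right (by linarith), min_eq_left h]; ring
  · rw [max_eq_left (by linarith), min_eq_right h]; ring

lemma l1_nonneg {n : ℕ} (v : Fin n → ℝ) : 0 ≤ l1Norm v :=
  Finset.sum_nonneg fun i _ => abs_nonneg _

lemma l1_le_two {n : ℕ} (u w : Fin n → ℝ) (hu : ∀ i, 0 ≤ u i) (hw : ∀ i, 0 ≤ w i)
    (hsu : ∑ i, u i = 1) (hsw : ∑ i, w i = 1) : l1Norm (fun i => u i - w i) ≤ 2 := by
  have : l1Norm (fun i => u i - w i) ≤ ∑ i, (u i + w i) := by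
    refine Finset.sum_le_sum fun i _ => ?_
    dsimp only
    have := hu i; have := hw i
    exact abs_le.mpr ⟨by linarith, by linarith⟩
  rw [Finset.sum_add_distrib, hsu, hsw] at this
  linarith

theorem stmt1 (n T : ℕ) (hn : 1 ≤ n) (hT : 1 ≤ T)
    (c l : Fin n → Fin n → ℝ)
    (hc : ∀ i j, 0 ≤ c i j) (hl : ∀ i j, 0 ≤ l i j)
    (cmax : ℝ) (hcmax : IsGreatest {x : ℝ | ∃ i j, x = c i j} cmax)
    (x y d : ℕ → Fin n → ℝ) (P : ℕ → Fin n → Fin n → ℝ)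
    (hx1 : x 1 ∈ stdSimplex ℝ (Fin n))
    (hy0 : y 0 = x 1)
    (hy : ∀ t, 1 ≤ t → t ≤ T → y t ∈ stdSimplex ℝ (Fin n))
    (hd : ∀ t, 1 ≤ t → t ≤ T → ∀ i, 0 ≤ d t i)
    (hP : ∀ t, 1 ≤ t → t ≤ T → RowStochastic (P t))
    (hdyn : ∀ t, 1 ≤ t → t ≤ T → ∀ i,
      x (t + 1) i = max (y t i - d t i) 0 + ∑ j, P t j i * min (y t j) (d t j)) :
    |(∑ t ∈ Finset.Icc 1 T, Ctilde c l (x t) (y t) (d t) (P t))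
      - ∑ t ∈ Finset.Icc 1 T, Ctilde c l (x (t + 1)) (y t) (d t) (P t)|
      ≤ 2 * cmax * (1 + ∑ t ∈ Finset.Icc 1 T, l1Norm (fun i => y t i - y (t - 1) i)) := by
  obtain ⟨⟨i0, j0, hceq⟩, hub⟩ := hcmax
  have hcb : ∀ i j, c i j ≤ cmax := fun i j => hub ⟨i, j, rfl⟩
  have hcmax0 : 0 ≤ cmax := by rw [hceq]; exact hc i0 j0
  have hysum : ∀ t, 1 ≤ t → t ≤ T → ∑ i, y t i = 1 := fun t h1 h2 => (hy t h1 h2).2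
  have hynn : ∀ t, 1 ≤ t → t ≤ T → ∀ i, 0 ≤ y t i := fun t h1 h2 => (hy t h1 h2).1
  -- sum of x (t+1) equals 1 for t in [1,T]
  have hxsumS : ∀ t, 1 ≤ t → t ≤ T → ∑ i, x (t + 1) i = 1 := by
    intro t h1 h2
    have hrow := (hP t h1 h2).2
    calc ∑ i, x (t + 1) i
        = ∑ i, (max (y t i - d t i) 0 + ∑ j, P t j i * min (y t j) (d t j)) :=
          Finset.sum_congr rfl fun i _ => hdyn t h1 h2 i
      _ = (∑ i, max (y t i - d t i) 0) + ∑ j, (min (y t j) (d t j)) * ∑ i, P t j i := by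
          rw [Finset.sum_add_distrib]; congr 1
          rw [Finset.sum_comm]
          refine Finset.sum_congr rfl fun j _ => ?_
          rw [Finset.mul_sum]
          exact Finset.sum_congr rfl fun i _ => by ring
      _ = ∑ i, (max (y t i - d t i) 0 + min (y t i) (d t i)) := by
          simp only [hrow, mul_one]; rw [Finset.sum_add_distrib]
      _ = ∑ i, y t i := Finset.sum_congr rfl fun i _ => maxmin _ _
      _ = 1 := hysum t h1 h2
  have hxnnS : ∀ t, 1 ≤ t → t ≤ T → ∀ i, 0 ≤ x (t + 1) i := by
    intro t h1 h2 i
    rw [hdyn t h1 h2 i]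
    refine add_nonneg (le_max_right _ _) (Finset.sum_nonneg fun j _ => ?_)
    exact mul_nonneg ((hP t h1 h2).1 j i).1 (le_min (hynn t h1 h2 j) (hd t h1 h2 j))
  have hxsum : ∀ t, 1 ≤ t → t ≤ T + 1 → ∑ i, x t i = 1 := by
    intro t h1 h2
    rcases Nat.exists_eq_add_of_le h1 with ⟨s, rfl⟩
    cases s with
    | zero => simpa using hx1.2
    | succ m =>
      have he : 1 + (m + 1) = (m + 1) + 1 := by ring
      rw [he]
      exact hxsumS (m + 1) (by omega) (by omega)
  have hxnn : ∀ t, 1 ≤ t → t ≤ T + 1 → ∀ i, 0 ≤ x t i := by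
    intro t h1 h2
    rcases Nat.exists_eq_add_of_le h1 with ⟨s, rfl⟩
    cases s with
    | zero => simpa using hx1.1
    | succ m =>
      have he : 1 + (m + 1) = (m + 1) + 1 := by ring
      rw [he]
      exact hxnnS (m + 1) (by omega) (by omega)
  set A : ℕ → ℝ := fun t => repoCost c (fun i => y t i - x t i) with hA
  set B : ℕ → ℝ := fun t => repoCost c (fun i => y t i - x (t + 1) i) with hB
  have hL : (∑ t ∈ Finset.Icc 1 T, Ctilde c l (x t) (y t) (d t) (P t))
      - ∑ t ∈ Finset.Icc 1 T, Ctilde c l (x (t + 1)) (y t) (d t) (P t)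
      = ∑ t ∈ Finset.Icc 1 T, (A t - B t) := by
    rw [← Finset.sum_sub_distrib]
    refine Finset.sum_congr rfl fun t _ => ?_
    simp only [Ctilde, hA, hB]
    ring
  -- zero-sum facts
  have hz1 : ∀ t, 1 ≤ t → t ≤ T → ∑ i, (y t i - x t i) = 0 := by
    intro t h1 h2
    rw [Finset.sum_sub_distrib, hysum t h1 h2, hxsum t h1 (by omega)]; ring
  have hz2 : ∀ t, 1 ≤ t → t ≤ T → ∑ i, (y t i - x (t + 1) i) = 0 := by
    intro t h1 h2
    rw [Finset.sum_sub_distrib, hysum t h1 h2, hxsumS t h1 h2]; ring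
  -- boundary bounds
  have hA1ub : A 1 ≤ cmax := by
    have h1 := repo_le c cmax hc hcb (fun i => y 1 i - x 1 i) (hz1 1 le_rfl hT)
    have h2 := l1_le_two (y 1) (x 1) (hynn 1 le_rfl hT) hx1.1 (hysum 1 le_rfl hT) hx1.2
    nlinarith
  have hA1lb : 0 ≤ A 1 := repo_nonneg c hc _
  have hBTub : B T ≤ cmax := by
    have h1 := repo_le c cmax hc hcb (fun i => y T i - x (T + 1) i) (hz2 T hT le_rfl)
    have h2 := l1_le_two (y T) (x (T + 1)) (hynn T hT le_rfl) (hxnn (T + 1) (by omega) le_rfl)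
      (hysum T hT le_rfl) (hxsum (T + 1) (by omega) le_rfl)
    nlinarith
  have hBTlb : 0 ≤ B T := repo_nonneg c hc _
  -- per-step bound
  have hstep : ∀ t, 1 ≤ t → t + 1 ≤ T →
      |A (t + 1) - B t| ≤ cmax * l1Norm (fun i => y (t + 1) i - y t i) := by
    intro t h1 h2
    have hs1 : ∑ i, (y (t + 1) i - x (t + 1) i) = 0 := hz1 (t + 1) (by omega) h2
    have hs2 : ∑ i, (y t i - x (t + 1) i) = 0 := hz2 t h1 (by omega)
    have hd1 := repo_lip c cmax hc hcb _ _ hs2 hs1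
    have hd2 := repo_lip c cmax hc hcb _ _ hs1 hs2
    have he1 : l1Norm (fun i => (y (t + 1) i - x (t + 1) i) - (y t i - x (t + 1) i))
        = l1Norm (fun i => y (t + 1) i - y t i) := by
      unfold l1Norm
      refine Finset.sum_congr rfl fun i _ => ?_
      congr 1; ring
    have he2 : l1Norm (fun i => (y t i - x (t + 1) i) - (y (t + 1) i - x (t + 1) i))
        = l1Norm (fun i => y (t + 1) i - y t i) := by
      unfold l1Norm
      refine Finset.sum_congr rfl fun i _ => ?_
      dsimp only
      rw [show (y t i - x (t + 1) i) - (y (t + 1) i - x (t + 1) i)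
          = -(y (t + 1) i - y t i) by ring, abs_neg]
    rw [he1] at hd1
    rw [he2] at hd2
    have hln : 0 ≤ l1Norm (fun i => y (t + 1) i - y t i) := l1_nonneg _
    rw [abs_sub_le_iff]
    constructor <;> nlinarith
  -- main induction
  have hmain : ∀ S, 1 ≤ S → S ≤ T →
      |(∑ t ∈ Finset.Icc 1 S, (A t - B t)) - A 1 + B S|
        ≤ ∑ t ∈ Finset.Icc 2 S, cmax * l1Norm (fun i => y t i - y (t - 1) i) := by
    intro S hS1
    induction S, hS1 using Nat.le_induction with
    | base =>
      intro _
      rw [Finset.Icc_self, Finset.sum_singleton, Finset.Icc_eq_empty (by omega),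
        Finset.sum_empty]
      have : A 1 - B 1 - A 1 + B 1 = 0 := by ring
      rw [this, abs_zero]
    | succ m hm ih =>
      intro hmT
      have ihm := ih (by omega)
      rw [Finset.sum_Icc_succ_top (by omega : 1 ≤ m + 1),
        Finset.sum_Icc_succ_top (by omega : 2 ≤ m + 1)]
      have hst := hstep m (by omega) (by omega)
      have hsimp : (m + 1) - 1 = m := by omega
      rw [hsimp]
      calc |(∑ t ∈ Finset.Icc 1 m, (A t - B t)) + (A (m + 1) - B (m + 1)) - A 1 + B (m + 1)|
          = |((∑ t ∈ Finset.Icc 1 m, (A t - B t)) - A 1 + B m) + (A (m + 1) - B m)| := by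
            congr 1; ring
        _ ≤ |(∑ t ∈ Finset.Icc 1 m, (A t - B t)) - A 1 + B m| + |A (m + 1) - B m| :=
            abs_add_le _ _
        _ ≤ (∑ t ∈ Finset.Icc 2 m, cmax * l1Norm (fun i => y t i - y (t - 1) i))
            + cmax * l1Norm (fun i => y (m + 1) i - y m i) := add_le_add ihm hst
  have hfin := hmain T hT le_rfl
  rw [hL]
  have habs : |∑ t ∈ Finset.Icc 1 T, (A t - B t)|
      ≤ (∑ t ∈ Finset.Icc 2 T, cmax * l1Norm (fun i => y t i - y (t - 1) i)) + 2 * cmax := by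
    calc |∑ t ∈ Finset.Icc 1 T, (A t - B t)|
        = |((∑ t ∈ Finset.Icc 1 T, (A t - B t)) - A 1 + B T) + (A 1 - B T)| := by
          congr 1; ring
      _ ≤ |(∑ t ∈ Finset.Icc 1 T, (A t - B t)) - A 1 + B T| + |A 1 - B T| := abs_add_le _ _
      _ ≤ (∑ t ∈ Finset.Icc 2 T, cmax * l1Norm (fun i => y t i - y (t - 1) i)) + 2 * cmax :=
          add_le_add hfin (abs_le.mpr ⟨by linarith, by linarith⟩)
  have hsum_le : (∑ t ∈ Finset.Icc 2 T, cmax * l1Norm (fun i => y t i - y (t - 1) i))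
      ≤ 2 * cmax * ∑ t ∈ Finset.Icc 1 T, l1Norm (fun i => y t i - y (t - 1) i) := by
    have hsub : (∑ t ∈ Finset.Icc 2 T, cmax * l1Norm (fun i => y t i - y (t - 1) i))
        ≤ ∑ t ∈ Finset.Icc 1 T, cmax * l1Norm (fun i => y t i - y (t - 1) i) := by
      refine Finset.sum_le_sum_of_subset_of_nonneg
        (Finset.Icc_subset_Icc_left (by omega)) fun t _ _ => ?_
      exact mul_nonneg hcmax0 (l1_nonneg _)
    have heq : (∑ t ∈ Finset.Icc 1 T, cmax * l1Norm (fun i => y t i - y (t - 1) i))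
        = cmax * ∑ t ∈ Finset.Icc 1 T, l1Norm (fun i => y t i - y (t - 1) i) :=
      (Finset.mul_sum _ _ _).symm
    have hSnn : 0 ≤ ∑ t ∈ Finset.Icc 1 T, l1Norm (fun i => y t i - y (t - 1) i) :=
      Finset.sum_nonneg fun t _ => l1_nonneg _
    nlinarith
  have hrhs : 2 * cmax * (1 + ∑ t ∈ Finset.Icc 1 T, l1Norm (fun i => y t i - y (t - 1) i))
      = 2 * cmax + 2 * cmax * ∑ t ∈ Finset.Icc 1 T, l1Norm (fun i => y t i - y (t - 1) i) := by
    ring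
  rw [hrhs]
  linarith
end

section
/- Let n ≥ 1, D > 0, G > 0, T ≥ 1. Let K ⊆ ℝ^n be nonempty, closed, and convex with ‖x − y‖₂ ≤ D for all x, y ∈ K. Let f₁,…,f_T : ℝ^n → ℝ, let x₁ ∈ K, and suppose for each t = 1,…,T: g_t ∈ ℝ^n satisfies ‖g_t‖₂ ≤ G and f_t(y) ≥ f_t(x_t) + ⟨g_t, y − x_t⟩ for all y ∈ K; and x_{t+1} ∈ K satisfies ‖x_{t+1} − (x_t − (D/(G√t)) g_t)‖₂ ≤ ‖z − (x_t − (D/(G√t)) g_t)‖₂ for all z ∈ K (i.e., x_{t+1} is the Euclidean projection of the gradient step onto K). Then for every x* ∈ K: ∑_{t=1}^T f_t(x_t) − ∑_{t=1}^T f_t(x*) ≤ 3 D G √T. -/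
/-- The Euclidean (ℓ²) norm on `ℝ^n`. -/
noncomputable def l2Norm {n : ℕ} (v : Fin n → ℝ) : ℝ := Real.sqrt (∑ i, (v i) ^ 2)

/-! Projecting onto a convex set `K` does not increase the distance to points of `K`, so one
step gives `2ηₜ⟪gₜ, xₜ - u⟫ ≤ ‖xₜ - u‖² - ‖xₜ₊₁ - u‖² + ηₜ²‖gₜ‖²`. Divided by `2ηₜ` and summed,
the distance terms are summed by parts against the nondecreasing weights `1/(2ηₜ)` and contribute
at most `D²/(2η_T) = DG√T/2`, while `∑ ηₜG²/2 = (DG/2) ∑ 1/√t ≤ DG√T`. The subgradient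
inequality bounds the regret by the linearized regret `∑ ⟪gₜ, xₜ - u⟫`. -/

open Finset
open scoped RealInnerProductSpace

theorem sum_Icc_mul_sub_succ_le {R : Type*} [CommRing R] [LinearOrder R] [IsStrictOrderedRing R]
    {c a : ℕ → R} {B : R} (hc : Monotone c) (hc1 : 0 ≤ c 1)
    {T : ℕ} (hT : 1 ≤ T) (ha : ∀ t ∈ Icc 1 T, a t ≤ B) :
    ∑ t ∈ Icc 1 T, c t * (a t - a (t + 1)) ≤ c T * (B - a (T + 1)) := by
  induction T, hT using Nat.le_induction with
  | base =>
    rw [Icc_self, sum_singleton, mul_sub, mul_sub]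
    linarith [mul_le_mul_of_nonneg_left (ha 1 (by simp)) hc1]
  | succ T hT ih =>
    rw [sum_Icc_succ_top (by omega)]
    have ih := ih fun t ht => ha t (Icc_subset_Icc_right (Nat.le_succ T) ht)
    have hcT := hc (Nat.le_succ T)
    have haT := ha (T + 1) (by simp)
    nlinarith

theorem sum_Icc_inv_sqrt_le (T : ℕ) : ∑ t ∈ Icc 1 T, (√t)⁻¹ ≤ 2 * √T := by
  induction T with
  | zero => simp
  | succ T ih =>
    rw [sum_Icc_succ_top (by omega)]
    have hT : 0 ≤ (T : ℝ) := T.cast_nonneg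
    have hpos : 0 < √((T : ℝ) + 1) := Real.sqrt_pos.2 (by linarith)
    have hstep : (√((T : ℝ) + 1))⁻¹ ≤ 2 * √((T : ℝ) + 1) - 2 * √T := by
      rw [inv_le_iff_one_le_mul₀ hpos]
      nlinarith [sq_nonneg (√T - √((T : ℝ) + 1)), Real.sq_sqrt hT,
        Real.sq_sqrt (by linarith : (0 : ℝ) ≤ T + 1)]
    push_cast
    linarith

section ProjectedSubgradient

variable {E : Type*} [NormedAddCommGroup E] [InnerProductSpace ℝ E] {K : Set E}

theorem Convex.norm_sub_le_of_isMinOn_norm_sub (hK : Convex ℝ K) {y p s : E} (hp : p ∈ K)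
    (hs : s ∈ K) (hmin : IsMinOn (fun z => ‖z - y‖) K p) : ‖p - s‖ ≤ ‖y - s‖ := by
  have hinf : ‖y - p‖ = ⨅ w : K, ‖y - w‖ := by
    simp_rw [norm_sub_rev y]
    exact (hmin.iInf_eq hp).symm
  have hobtuse : ⟪y - p, s - p⟫ ≤ 0 := (norm_eq_iInf_iff_real_inner_le_zero hK hp).1 hinf s hs
  have hexpand : ‖y - s‖ ^ 2 = ‖y - p‖ ^ 2 - 2 * ⟪y - p, s - p⟫ + ‖s - p‖ ^ 2 := by
    rw [← norm_sub_sq_real, sub_sub_sub_cancel_right]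
  rw [norm_sub_rev p s]
  exact le_of_sq_le_sq (by nlinarith [sq_nonneg ‖y - p‖]) (norm_nonneg _)

theorem inner_sub_le_of_isMinOn_norm_sub_step (hK : Convex ℝ K) {a g p u : E} {η : ℝ}
    (hη : 0 < η) (hp : p ∈ K) (hu : u ∈ K)
    (hmin : IsMinOn (fun z => ‖z - (a - η • g)‖) K p) :
    ⟪g, a - u⟫ ≤ (‖a - u‖ ^ 2 - ‖p - u‖ ^ 2) / (2 * η) + η * ‖g‖ ^ 2 / 2 := by
  have hcontract := hK.norm_sub_le_of_isMinOn_norm_sub hp hu hmin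
  have hexpand : ‖a - η • g - u‖ ^ 2 = ‖a - u‖ ^ 2 - 2 * η * ⟪g, a - u⟫ + η ^ 2 * ‖g‖ ^ 2 := by
    rw [sub_right_comm, norm_sub_sq_real, real_inner_smul_right, real_inner_comm, norm_smul,
      Real.norm_of_nonneg hη.le]
    ring
  have hsq : ‖p - u‖ ^ 2 ≤ ‖a - η • g - u‖ ^ 2 := pow_le_pow_left₀ (norm_nonneg _) hcontract 2
  rw [div_add_div _ _ (by positivity) two_ne_zero, le_div_iff₀ (by positivity)]
  nlinarith

theorem sum_inner_sub_le_of_projected_steps (hK : Convex ℝ K) {D : ℝ}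
    (hdiam : ∀ y ∈ K, ∀ z ∈ K, ‖y - z‖ ≤ D) {T : ℕ} (hT : 1 ≤ T) {η : ℕ → ℝ}
    (hη : ∀ t ∈ Icc 1 T, 0 < η t) (hη_inv : Monotone fun t => (η t)⁻¹) {x g : ℕ → E}
    (hx1 : x 1 ∈ K)
    (hproj : ∀ t ∈ Icc 1 T,
      x (t + 1) ∈ K ∧ IsMinOn (fun z => ‖z - (x t - η t • g t)‖) K (x (t + 1)))
    {u : E} (hu : u ∈ K) :
    ∑ t ∈ Icc 1 T, ⟪g t, x t - u⟫ ≤ D ^ 2 / (2 * η T) + ∑ t ∈ Icc 1 T, η t * ‖g t‖ ^ 2 / 2 := by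
  set c : ℕ → ℝ := fun t => (2 * η t)⁻¹
  set a : ℕ → ℝ := fun t => ‖x t - u‖ ^ 2
  have hxK : ∀ t ∈ Icc 1 T, x t ∈ K := by
    intro t ht
    obtain ⟨h1, hle⟩ := mem_Icc.1 ht
    clear ht
    induction t, h1 using Nat.le_induction with
    | base => exact hx1
    | succ t h1 _ => exact (hproj t (mem_Icc.2 ⟨h1, by omega⟩)).1
  have hround : ∀ t ∈ Icc 1 T,
      ⟪g t, x t - u⟫ ≤ c t * (a t - a (t + 1)) + η t * ‖g t‖ ^ 2 / 2 := by
    intro t ht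
    obtain ⟨hmem, hmin⟩ := hproj t ht
    have := inner_sub_le_of_isMinOn_norm_sub_step hK (hη t ht) hmem hu hmin
    rwa [div_eq_inv_mul] at this
  have hc : Monotone c := fun s t hst => by
    simpa only [c, mul_inv] using mul_le_mul_of_nonneg_left (hη_inv hst) (by norm_num)
  have hc1 : 0 ≤ c 1 := by have := hη 1 (by simp; omega); positivity
  have ha : ∀ t ∈ Icc 1 T, a t ≤ D ^ 2 := fun t ht =>
    pow_le_pow_left₀ (norm_nonneg _) (hdiam _ (hxK t ht) _ hu) 2
  calc ∑ t ∈ Icc 1 T, ⟪g t, x t - u⟫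
      ≤ ∑ t ∈ Icc 1 T, (c t * (a t - a (t + 1)) + η t * ‖g t‖ ^ 2 / 2) := sum_le_sum hround
    _ = ∑ t ∈ Icc 1 T, c t * (a t - a (t + 1)) + ∑ t ∈ Icc 1 T, η t * ‖g t‖ ^ 2 / 2 :=
        sum_add_distrib
    _ ≤ c T * (D ^ 2 - a (T + 1)) + ∑ t ∈ Icc 1 T, η t * ‖g t‖ ^ 2 / 2 := by
        gcongr
        exact sum_Icc_mul_sub_succ_le hc hc1 hT ha
    _ ≤ D ^ 2 / (2 * η T) + ∑ t ∈ Icc 1 T, η t * ‖g t‖ ^ 2 / 2 := by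
        have : 0 ≤ c T * a (T + 1) := mul_nonneg (hc1.trans (hc hT)) (sq_nonneg _)
        simp only [c, div_eq_inv_mul] at this ⊢
        linarith [mul_sub (2 * η T)⁻¹ (D ^ 2) (a (T + 1))]

theorem sum_inner_sub_le_of_projected_steps_sqrt (hK : Convex ℝ K) {D G : ℝ} (hD : 0 < D)
    (hG : 0 < G) (hdiam : ∀ y ∈ K, ∀ z ∈ K, ‖y - z‖ ≤ D) {T : ℕ} (hT : 1 ≤ T) {x g : ℕ → E}
    (hx1 : x 1 ∈ K) (hg : ∀ t ∈ Icc 1 T, ‖g t‖ ≤ G)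
    (hproj : ∀ t ∈ Icc 1 T, x (t + 1) ∈ K ∧
      IsMinOn (fun z => ‖z - (x t - (D / (G * √t)) • g t)‖) K (x (t + 1)))
    {u : E} (hu : u ∈ K) :
    ∑ t ∈ Icc 1 T, ⟪g t, x t - u⟫ ≤ 3 / 2 * D * G * √T := by
  set η : ℕ → ℝ := fun t => D / (G * √t)
  have hη : ∀ t ∈ Icc 1 T, 0 < η t := fun t ht => by
    have : (0 : ℝ) < t := by exact_mod_cast (mem_Icc.1 ht).1
    positivity
  -- `(η t)⁻¹ = G √t / D` also at `t = 0`, where both sides are `0`.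
  have hη_inv : Monotone fun t => (η t)⁻¹ := fun s t hst => by
    simp only [η, inv_div]
    gcongr
  have hstep : ∀ t ∈ Icc 1 T, η t * ‖g t‖ ^ 2 / 2 ≤ D * G / 2 * (√t)⁻¹ := fun t ht =>
    calc η t * ‖g t‖ ^ 2 / 2 ≤ η t * G ^ 2 / 2 := by have := hg t ht; gcongr
      _ = D * G / 2 * (√t)⁻¹ := by simp only [η]; field_simp
  calc ∑ t ∈ Icc 1 T, ⟪g t, x t - u⟫
      ≤ D ^ 2 / (2 * η T) + ∑ t ∈ Icc 1 T, η t * ‖g t‖ ^ 2 / 2 :=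
        sum_inner_sub_le_of_projected_steps hK hdiam hT hη hη_inv hx1 hproj hu
    _ ≤ D * G * √T / 2 + D * G / 2 * ∑ t ∈ Icc 1 T, (√t)⁻¹ := by
      rw [mul_sum]
      refine add_le_add (le_of_eq ?_) (sum_le_sum hstep)
      simp only [η]
      field_simp
    _ ≤ D * G * √T / 2 + D * G / 2 * (2 * √T) := by gcongr; exact sum_Icc_inv_sqrt_le T
    _ = 3 / 2 * D * G * √T := by ring

end ProjectedSubgradient

theorem l2Norm_eq_norm_toLp {n : ℕ} (v : Fin n → ℝ) :
    l2Norm v = ‖(WithLp.toLp 2 v : EuclideanSpace ℝ (Fin n))‖ := by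
  simp [l2Norm, EuclideanSpace.norm_eq]

theorem sum_mul_eq_inner_toLp {n : ℕ} (u v : Fin n → ℝ) :
    ∑ i, u i * v i = ⟪(WithLp.toLp 2 u : EuclideanSpace ℝ (Fin n)), WithLp.toLp 2 v⟫ := by
  simp [PiLp.inner_apply, mul_comm]

theorem stmt7_general (n T : ℕ) (hT : 1 ≤ T)
    (D G : ℝ) (hD : 0 < D) (hG : 0 < G)
    (K : Set (Fin n → ℝ)) (hKconv : Convex ℝ K)
    (hKdiam : ∀ x ∈ K, ∀ y ∈ K, l2Norm (fun i => x i - y i) ≤ D)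
    (f : ℕ → (Fin n → ℝ) → ℝ) (x g : ℕ → Fin n → ℝ)
    (hx1 : x 1 ∈ K)
    (hg : ∀ t, 1 ≤ t → t ≤ T →
      l2Norm (g t) ≤ G ∧
      ∀ y ∈ K, f t y ≥ f t (x t) + ∑ i, g t i * (y i - x t i))
    (hproj : ∀ t, 1 ≤ t → t ≤ T →
      x (t + 1) ∈ K ∧
      ∀ z ∈ K,
        l2Norm (fun i => x (t + 1) i - (x t i - (D / (G * Real.sqrt t)) * g t i))
          ≤ l2Norm (fun i => z i - (x t i - (D / (G * Real.sqrt t)) * g t i)))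
    (xstar : Fin n → ℝ) (hxstar : xstar ∈ K) :
    (∑ t ∈ Finset.Icc 1 T, f t (x t)) - ∑ t ∈ Finset.Icc 1 T, f t xstar
      ≤ 3 * D * G * Real.sqrt T := by
  let X : ℕ → EuclideanSpace ℝ (Fin n) := fun t => WithLp.toLp 2 (x t)
  let Γ : ℕ → EuclideanSpace ℝ (Fin n) := fun t => WithLp.toLp 2 (g t)
  let u : EuclideanSpace ℝ (Fin n) := WithLp.toLp 2 xstar
  have hproj' : ∀ t ∈ Icc 1 T, X (t + 1) ∈ WithLp.ofLp ⁻¹' K ∧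
      IsMinOn (fun z => ‖z - (X t - (D / (G * √t)) • Γ t)‖) (WithLp.ofLp ⁻¹' K) (X (t + 1)) := by
    intro t ht
    obtain ⟨hmem, hmin⟩ := hproj t (mem_Icc.1 ht).1 (mem_Icc.1 ht).2
    refine ⟨hmem, fun z hz => ?_⟩
    have := hmin z hz
    rwa [l2Norm_eq_norm_toLp, l2Norm_eq_norm_toLp] at this
  have hlinear : ∑ t ∈ Icc 1 T, ⟪Γ t, X t - u⟫ ≤ 3 / 2 * D * G * √T :=
    sum_inner_sub_le_of_projected_steps_sqrt
      (hKconv.linear_preimage (WithLp.linearEquiv 2 ℝ (Fin n → ℝ)).toLinearMap) hD hG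
      (fun y hy z hz => (l2Norm_eq_norm_toLp (fun i => y i - z i)).symm.trans_le (hKdiam _ hy _ hz))
      hT hx1
      (fun t ht => (l2Norm_eq_norm_toLp _).symm.trans_le (hg t (mem_Icc.1 ht).1 (mem_Icc.1 ht).2).1)
      hproj' hxstar
  have hround : ∀ t ∈ Icc 1 T, f t (x t) - f t xstar ≤ ⟪Γ t, X t - u⟫ := by
    intro t ht
    have hsub : f t (x t) + ⟪Γ t, u - X t⟫ ≤ f t xstar := by
      have := (hg t (mem_Icc.1 ht).1 (mem_Icc.1 ht).2).2 xstar hxstar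
      rwa [sum_mul_eq_inner_toLp] at this
    rw [← neg_sub u, inner_neg_right]
    linarith
  calc (∑ t ∈ Icc 1 T, f t (x t)) - ∑ t ∈ Icc 1 T, f t xstar
      = ∑ t ∈ Icc 1 T, (f t (x t) - f t xstar) := (sum_sub_distrib _ _).symm
    _ ≤ 3 / 2 * D * G * √T := (sum_le_sum hround).trans hlinear
    _ ≤ 3 * D * G * √T := by nlinarith [mul_pos hD hG, Real.sqrt_nonneg T]

theorem stmt7 (n T : ℕ) (hn : 1 ≤ n) (hT : 1 ≤ T)
    (D G : ℝ) (hD : 0 < D) (hG : 0 < G)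
    (K : Set (Fin n → ℝ)) (hKne : K.Nonempty) (hKcl : IsClosed K) (hKconv : Convex ℝ K)
    (hKdiam : ∀ x ∈ K, ∀ y ∈ K, l2Norm (fun i => x i - y i) ≤ D)
    (f : ℕ → (Fin n → ℝ) → ℝ) (x g : ℕ → Fin n → ℝ)
    (hx1 : x 1 ∈ K)
    (hg : ∀ t, 1 ≤ t → t ≤ T →
      l2Norm (g t) ≤ G ∧
      ∀ y ∈ K, f t y ≥ f t (x t) + ∑ i, g t i * (y i - x t i))
    (hproj : ∀ t, 1 ≤ t → t ≤ T →
      x (t + 1) ∈ K ∧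
      ∀ z ∈ K,
        l2Norm (fun i => x (t + 1) i - (x t i - (D / (G * Real.sqrt t)) * g t i))
          ≤ l2Norm (fun i => z i - (x t i - (D / (G * Real.sqrt t)) * g t i)))
    (xstar : Fin n → ℝ) (hxstar : xstar ∈ K) :
    (∑ t ∈ Finset.Icc 1 T, f t (x t)) - ∑ t ∈ Finset.Icc 1 T, f t xstar
      ≤ 3 * D * G * Real.sqrt T :=
  stmt7_general n T hT D G hD hG K hKconv hKdiam f x g hx1 hg hproj xstar hxstar
end

section
/- Let n ≥ 1, T ≥ 1, 1 ≤ t ≤ T, and let c = (c_{ij}), l = (l_{ij}) be nonnegative. Let (Ω, F, μ) be a probability space carrying measurable random pairs (d_s, P_s) for s = 1,…,t, independent and identically distributed, where each d_s takes values in [0,1]^n and each P_s takes values in the set of row-stochastic matrices in [0,1]^{n×n}. For S ∈ Δ_{n−1} define G(S, d, P) = M_c( min(S,d) − Pᵀ min(S,d) ) − ∑_{i,j=1}^n l_{ij} P_{ij} min(d_i, S_i), with min componentwise. Then μ( { ω : sup_{S ∈ Δ_{n−1}} | (1/t) ∑_{s=1}^t G(S, d_s(ω), P_s(ω)) − E[G(S,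 d₁, P₁)] | ≤ 40 · n³ · (max_{i,j} c_{ij} + max_{i,j} l_{ij}) · √(log T) / √t } ) ≥ 1 − 3/T². -/
/-!
For a fixed level `S` the costs `G(S, d_s, P_s)` are i.i.d. with values in `[-lmax, 2 cmax]`, so
Hoeffding's inequality controls their empirical mean. The repositioning cost is `cmax`-Lipschitz
for the `ℓ¹` distance on balanced vectors (compare with a star-shaped flow through one node),
hence `S ↦ G(S, d, P)` is `(2 cmax + lmax)`-Lipschitz. A union bound over the grid of mesh
`1 / (n T)` in the simplex, which has at most `(n T + 1)^n` points, and the Lipschitz bound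
between grid points give the uniform deviation bound; the grid error is of order `1 / T`.
-/

open MeasureTheory ProbabilityTheory

/-- The relabeled (surrogate) modified one-period cost of a base-stock policy with level `S`:
`G(S, d, P) = M_c(min(S,d) − Pᵀ min(S,d)) − ∑_{i,j} l_{ij} P_{ij} min(d_i, S_i)`. -/
noncomputable def Gcost {n : ℕ} (c l : Fin n → Fin n → ℝ)
    (S d : Fin n → ℝ) (P : Fin n → Fin n → ℝ) : ℝ :=
  repoCost c (fun j => min (S j) (d j) - ∑ i, P i j * min (S i) (d i))
    - ∑ i, ∑ j, l i j * P i j * min (d i) (S i)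

section RepoCost

variable {n : ℕ} {c : Fin n → Fin n → ℝ}

lemma repoCost_le_of_flow (hc : ∀ i j, 0 ≤ c i j) {v : Fin n → ℝ} {ξ : Fin n → Fin n → ℝ}
    (hξ : ∀ i j, 0 ≤ ξ i j) (hbal : ∀ j, (∑ i, ξ i j) - (∑ k, ξ j k) = v j) :
    repoCost c v ≤ ∑ i, ∑ j, c i j * ξ i j := by
  refine csInf_le ⟨0, ?_⟩ ⟨ξ, hξ, hbal, rfl⟩
  rintro r ⟨η, hη, -, rfl⟩
  exact Finset.sum_nonneg fun i _ => Finset.sum_nonneg fun j _ => mul_nonneg (hc i j) (hη i j)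

lemma le_repoCost {v : Fin n → ℝ} {a : ℝ} {ξ₀ : Fin n → Fin n → ℝ} (hξ₀ : ∀ i j, 0 ≤ ξ₀ i j)
    (hbal₀ : ∀ j, (∑ i, ξ₀ i j) - (∑ k, ξ₀ j k) = v j)
    (h : ∀ ξ : Fin n → Fin n → ℝ, (∀ i j, 0 ≤ ξ i j) →
      (∀ j, (∑ i, ξ i j) - (∑ k, ξ j k) = v j) → a ≤ ∑ i, ∑ j, c i j * ξ i j) :
    a ≤ repoCost c v := by
  refine le_csInf ⟨_, ξ₀, hξ₀, hbal₀, rfl⟩ ?_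
  rintro r ⟨ξ, hξ, hbal, rfl⟩
  exact h ξ hξ hbal

lemma repoCost_nonneg (hc : ∀ i j, 0 ≤ c i j) (v : Fin n → ℝ) : 0 ≤ repoCost c v := by
  refine Real.sInf_nonneg ?_
  rintro r ⟨ξ, hξ, -, rfl⟩
  exact Finset.sum_nonneg fun i _ => Finset.sum_nonneg fun j _ => mul_nonneg (hc i j) (hξ i j)

/-- Only balanced vectors can be realised by a flow; elsewhere `repoCost` is `sInf ∅ = 0`. -/
lemma repoCost_eq_zero_of_sum_ne_zero {v : Fin n → ℝ} (hv : ∑ j, v j ≠ 0) :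
    repoCost c v = 0 := by
  rw [repoCost, ← Real.sInf_empty]
  congr 1
  refine Set.eq_empty_of_forall_notMem ?_
  rintro r ⟨ξ, -, hbal, -⟩
  refine hv ?_
  simp_rw [← hbal, Finset.sum_sub_distrib]
  rw [Finset.sum_comm, sub_self]

lemma sum_abs_sub_le_card_mul_dist (v w : Fin n → ℝ) : ∑ j, |v j - w j| ≤ n * dist v w := by
  calc ∑ j, |v j - w j| ≤ ∑ _j : Fin n, dist v w :=
        Finset.sum_le_sum fun j _ => (Real.dist_eq _ _).symm.trans_le (dist_le_pi_dist v w j)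
    _ = n * dist v w := by simp

variable [NeZero n]

def starFlow (w : Fin n → ℝ) (i j : Fin n) : ℝ :=
  (if i = 0 then (w j)⁺ else 0) + (if j = 0 then (w i)⁻ else 0)

lemma starFlow_nonneg (w : Fin n → ℝ) (i j : Fin n) : 0 ≤ starFlow w i j := by
  unfold starFlow
  positivity

lemma starFlow_balance {w : Fin n → ℝ} (hw : ∑ j, w j = 0) (j : Fin n) :
    (∑ i, starFlow w i j) - (∑ k, starFlow w j k) = w j := by
  have hpn : ∑ i, (w i)⁻ = ∑ i, (w i)⁺ := by
    rw [← sub_eq_zero, ← Finset.sum_sub_distrib, ← neg_eq_zero, ← Finset.sum_neg_distrib]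
    simpa [posPart_sub_negPart] using hw
  simp only [starFlow, Finset.sum_add_distrib, Finset.sum_ite_eq',
    Finset.mem_univ, if_true]
  by_cases h : j = 0
  · simp only [h, if_true, hpn]
    linear_combination posPart_sub_negPart (w 0)
  · simp [h, posPart_sub_negPart]

lemma sum_sum_starFlow (w : Fin n → ℝ) : ∑ i, ∑ j, starFlow w i j = ∑ j, |w j| := by
  simp only [starFlow, Finset.sum_add_distrib, Finset.sum_ite_eq',
    Finset.mem_univ, if_true]
  rw [Finset.sum_comm]
  simp [← posPart_add_negPart, Finset.sum_add_distrib]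

lemma repoCost_le {cmax : ℝ} (hc : ∀ i j, 0 ≤ c i j) (hcmax : ∀ i j, c i j ≤ cmax)
    {v : Fin n → ℝ} (hv : ∑ j, v j = 0) :
    repoCost c v ≤ cmax * ∑ j, |v j| := by
  calc repoCost c v ≤ ∑ i, ∑ j, c i j * starFlow v i j :=
        repoCost_le_of_flow hc (starFlow_nonneg v) (starFlow_balance hv)
    _ ≤ ∑ i, ∑ j, cmax * starFlow v i j := by
        gcongr with i _ j _
        · exact starFlow_nonneg v i j
        · exact hcmax i j
    _ = cmax * ∑ j, |v j| := by simp_rw [← Finset.mul_sum, sum_sum_starFlow]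

/-- The sum of a flow realising `v` and one realising `w` realises `v + w`. -/
lemma repoCost_add_le (hc : ∀ i j, 0 ≤ c i j) {v w : Fin n → ℝ} (hv : ∑ j, v j = 0)
    (hw : ∑ j, w j = 0) :
    repoCost c (v + w) ≤ repoCost c v + repoCost c w := by
  rw [← sub_le_iff_le_add]
  refine le_repoCost (starFlow_nonneg v) (starFlow_balance hv) fun ξ hξ hξbal => ?_
  rw [sub_le_comm]
  refine le_repoCost (starFlow_nonneg w) (starFlow_balance hw) fun η hη hηbal => ?_
  rw [sub_le_iff_le_add']
  calc repoCost c (v + w) ≤ ∑ i, ∑ j, c i j * (ξ i j + η i j) := by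
        refine repoCost_le_of_flow hc (fun i j => add_nonneg (hξ i j) (hη i j)) fun j => ?_
        simp only [Finset.sum_add_distrib, Pi.add_apply, ← hξbal j, ← hηbal j]
        ring
    _ = _ := by simp only [mul_add, Finset.sum_add_distrib]

lemma abs_repoCost_sub_le {cmax : ℝ} (hc : ∀ i j, 0 ≤ c i j) (hcmax : ∀ i j, c i j ≤ cmax)
    {v w : Fin n → ℝ} (hv : ∑ j, v j = 0) (hw : ∑ j, w j = 0) :
    |repoCost c v - repoCost c w| ≤ cmax * ∑ j, |v j - w j| := by
  have hsub : ∀ {x y : Fin n → ℝ}, ∑ j, x j = 0 → ∑ j, y j = 0 →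
      repoCost c x - repoCost c y ≤ cmax * ∑ j, |x j - y j| := fun {x y} hx hy => by
    have hxy : ∑ j, (x - y) j = 0 := by simp [Finset.sum_sub_distrib, hx, hy]
    have hadd := repoCost_add_le hc hy hxy
    have hle := repoCost_le hc hcmax hxy
    rw [add_sub_cancel] at hadd
    simp only [Pi.sub_apply] at hle
    linarith
  rw [abs_sub_le_iff]
  refine ⟨hsub hv hw, ?_⟩
  simpa only [abs_sub_comm (w _)] using hsub hw hv

lemma measurable_repoCost (hc : ∀ i j, 0 ≤ c i j) : Measurable (repoCost c) := by
  classical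
  obtain ⟨C, hC⟩ := Finite.exists_le (Function.uncurry c)
  set s := {v : Fin n → ℝ | ∑ j, v j = 0}
  have hcont : ContinuousOn (repoCost c) s := by
    have hC0 : 0 ≤ C := (hc 0 0).trans (hC (0, 0))
    refine (LipschitzOnWith.of_dist_le_mul (K := Real.toNNReal (C * n)) fun v hv w hw => ?_)
      |>.continuousOn
    rw [Real.dist_eq, Real.coe_toNNReal _ (by positivity), mul_assoc]
    exact (abs_repoCost_sub_le hc (fun i j => hC (i, j)) hv hw).trans
      (mul_le_mul_of_nonneg_left (sum_abs_sub_le_card_mul_dist v w) hC0)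
  have hzero : ContinuousOn (repoCost c) sᶜ :=
    continuousOn_const.congr fun v hv => repoCost_eq_zero_of_sum_ne_zero (c := c) hv
  simpa only [Set.piecewise_same] using
    hcont.measurable_piecewise hzero (measurableSet_eq_fun (by fun_prop) measurable_const)

end RepoCost

section BaseStock

variable {n : ℕ} {c l P : Fin n → Fin n → ℝ} {cmax lmax : ℝ}

def netFlow (P : Fin n → Fin n → ℝ) (x : Fin n → ℝ) (j : Fin n) : ℝ :=
  x j - ∑ i, P i j * x i

lemma Gcost_eq (c l : Fin n → Fin n → ℝ) (S d : Fin n → ℝ) (P : Fin n → Fin n → ℝ) :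
    Gcost c l S d P = repoCost c (netFlow P fun i => min (S i) (d i))
      - ∑ i, ∑ j, l i j * P i j * min (d i) (S i) := rfl

lemma sum_netFlow (hP : ∀ i, ∑ j, P i j = 1) (x : Fin n → ℝ) : ∑ j, netFlow P x j = 0 := by
  simp only [netFlow, Finset.sum_sub_distrib]
  rw [Finset.sum_comm]
  simp [← Finset.sum_mul, hP]

lemma netFlow_sub (P : Fin n → Fin n → ℝ) (x y : Fin n → ℝ) (j : Fin n) :
    netFlow P x j - netFlow P y j = netFlow P (x - y) j := by
  simp only [netFlow, Pi.sub_apply, mul_sub, Finset.sum_sub_distrib]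
  ring

lemma sum_abs_netFlow_le (hP : RowStochastic P) (x : Fin n → ℝ) :
    ∑ j, |netFlow P x j| ≤ 2 * ∑ i, |x i| := by
  calc ∑ j, |netFlow P x j| ≤ ∑ j, (|x j| + ∑ i, P i j * |x i|) := by
        refine Finset.sum_le_sum fun j _ => (abs_sub _ _).trans (add_le_add le_rfl ?_)
        refine (Finset.abs_sum_le_sum_abs _ _).trans_eq (Finset.sum_congr rfl fun i _ => ?_)
        rw [abs_mul, abs_of_nonneg (hP.1 i j).1]
    _ = 2 * ∑ i, |x i| := by
        rw [Finset.sum_add_distrib, Finset.sum_comm]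
        simp [← Finset.sum_mul, hP.2, two_mul]

lemma abs_sum_sum_mul_le (hl : ∀ i j, 0 ≤ l i j) (hlmax : ∀ i j, l i j ≤ lmax)
    (hP : RowStochastic P) (x : Fin n → ℝ) :
    |∑ i, ∑ j, l i j * P i j * x i| ≤ lmax * ∑ i, |x i| := by
  calc |∑ i, ∑ j, l i j * P i j * x i| ≤ ∑ i, ∑ j, lmax * P i j * |x i| := by
        refine (Finset.abs_sum_le_sum_abs _ _).trans (Finset.sum_le_sum fun i _ => ?_)
        refine (Finset.abs_sum_le_sum_abs _ _).trans (Finset.sum_le_sum fun j _ => ?_)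
        rw [abs_mul, abs_mul, abs_of_nonneg (hl i j), abs_of_nonneg (hP.1 i j).1]
        gcongr
        · exact (hP.1 i j).1
        · exact hlmax i j
    _ = lmax * ∑ i, |x i| := by
        simp [← Finset.sum_mul, ← Finset.mul_sum, mul_assoc, hP.2]

lemma sum_abs_min_le_one {S d : Fin n → ℝ} (hS : S ∈ stdSimplex ℝ (Fin n))
    (hd : ∀ i, 0 ≤ d i) : ∑ i, |min (S i) (d i)| ≤ 1 := by
  calc ∑ i, |min (S i) (d i)| ≤ ∑ i, S i := by
        refine Finset.sum_le_sum fun i _ => ?_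
        rw [abs_of_nonneg (le_min (hS.1 i) (hd i))]
        exact min_le_left _ _
    _ = 1 := hS.2

variable [NeZero n]

lemma Gcost_mem_Icc (hc : ∀ i j, 0 ≤ c i j) (hcmax : ∀ i j, c i j ≤ cmax)
    (hl : ∀ i j, 0 ≤ l i j) (hlmax : ∀ i j, l i j ≤ lmax) (hP : RowStochastic P)
    {S d : Fin n → ℝ} (hS : S ∈ stdSimplex ℝ (Fin n)) (hd : ∀ i, 0 ≤ d i) :
    Gcost c l S d P ∈ Set.Icc (-lmax) (2 * cmax) := by
  have hcm : 0 ≤ cmax := (hc 0 0).trans (hcmax 0 0)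
  have hlm : 0 ≤ lmax := (hl 0 0).trans (hlmax 0 0)
  have hmin := sum_abs_min_le_one hS hd
  have hrepo : repoCost c (netFlow P fun i => min (S i) (d i)) ≤ 2 * cmax := by
    calc _ ≤ cmax * ∑ j, |netFlow P (fun i => min (S i) (d i)) j| :=
          repoCost_le hc hcmax (sum_netFlow hP.2 _)
      _ ≤ cmax * (2 * 1) := by gcongr; exact (sum_abs_netFlow_le hP _).trans (by linarith)
      _ = 2 * cmax := by ring
  have hlost : |∑ i, ∑ j, l i j * P i j * min (d i) (S i)| ≤ lmax := by
    refine (abs_sum_sum_mul_le hl hlmax hP _).trans (mul_le_of_le_one_right hlm ?_)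
    simpa only [min_comm] using hmin
  have hlost0 : 0 ≤ ∑ i, ∑ j, l i j * P i j * min (d i) (S i) :=
    Finset.sum_nonneg fun i _ => Finset.sum_nonneg fun j _ =>
      mul_nonneg (mul_nonneg (hl i j) (hP.1 i j).1) (le_min (hd i) (hS.1 i))
  rw [Gcost_eq]
  have := repoCost_nonneg hc (netFlow P fun i => min (S i) (d i))
  constructor <;> linarith [abs_le.mp hlost]

lemma abs_Gcost_sub_le (hc : ∀ i j, 0 ≤ c i j) (hcmax : ∀ i j, c i j ≤ cmax)
    (hl : ∀ i j, 0 ≤ l i j) (hlmax : ∀ i j, l i j ≤ lmax) (hP : RowStochastic P)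
    (S S' d : Fin n → ℝ) :
    |Gcost c l S d P - Gcost c l S' d P| ≤ (2 * cmax + lmax) * ∑ i, |S i - S' i| := by
  have hcm : 0 ≤ cmax := (hc 0 0).trans (hcmax 0 0)
  have hmin : ∀ a b x : ℝ, |min a x - min b x| ≤ |a - b| := fun a b x => by
    simpa using abs_min_sub_min_le_max a x b x
  set x : Fin n → ℝ := fun i => min (S i) (d i)
  set x' : Fin n → ℝ := fun i => min (S' i) (d i)
  have hxx' : ∑ i, |(x - x') i| ≤ ∑ i, |S i - S' i| :=
    Finset.sum_le_sum fun i _ => hmin _ _ _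
  have hrepo : |repoCost c (netFlow P x) - repoCost c (netFlow P x')|
      ≤ cmax * (2 * ∑ i, |S i - S' i|) := by
    refine (abs_repoCost_sub_le hc hcmax (sum_netFlow hP.2 x) (sum_netFlow hP.2 x')).trans ?_
    simp only [netFlow_sub]
    gcongr
    exact (sum_abs_netFlow_le hP _).trans (by linarith)
  have hlost : |∑ i, ∑ j, l i j * P i j * min (d i) (S i)
      - ∑ i, ∑ j, l i j * P i j * min (d i) (S' i)| ≤ lmax * ∑ i, |S i - S' i| := by
    have := abs_sum_sum_mul_le hl hlmax hP fun i => min (d i) (S i) - min (d i) (S' i)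
    simp only [mul_sub, Finset.sum_sub_distrib] at this
    refine this.trans (mul_le_mul_of_nonneg_left (Finset.sum_le_sum fun i _ => ?_)
      ((hl 0 0).trans (hlmax 0 0)))
    simpa only [min_comm (d i)] using hmin (S i) (S' i) (d i)
  rw [Gcost_eq, Gcost_eq]
  calc _ ≤ |repoCost c (netFlow P x) - repoCost c (netFlow P x')|
        + |∑ i, ∑ j, l i j * P i j * min (d i) (S i)
          - ∑ i, ∑ j, l i j * P i j * min (d i) (S' i)| := by
        rw [sub_sub_sub_comm]; exact abs_sub _ _
    _ ≤ _ := by linarith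

lemma abs_mean_Gcost_sub_le {t : ℕ} (hc : ∀ i j, 0 ≤ c i j) (hcmax : ∀ i j, c i j ≤ cmax)
    (hl : ∀ i j, 0 ≤ l i j) (hlmax : ∀ i j, l i j ≤ lmax) {d : Fin t → Fin n → ℝ}
    {P : Fin t → Fin n → Fin n → ℝ} (hP : ∀ s, RowStochastic (P s)) (S S' : Fin n → ℝ) :
    |(1 / t : ℝ) * (∑ s, Gcost c l S (d s) (P s)) - (1 / t : ℝ) * (∑ s, Gcost c l S' (d s) (P s))|
      ≤ (2 * cmax + lmax) * ∑ i, |S i - S' i| := by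
  rw [← mul_sub, ← Finset.sum_sub_distrib, abs_mul, abs_of_nonneg (by positivity)]
  have hC : 0 ≤ (2 * cmax + lmax) * ∑ i, |S i - S' i| := by
    have := (hc 0 0).trans (hcmax 0 0)
    have := (hl 0 0).trans (hlmax 0 0)
    positivity
  calc (1 / t : ℝ) * |∑ s, (Gcost c l S (d s) (P s) - Gcost c l S' (d s) (P s))|
      ≤ (1 / t : ℝ) * ∑ _s : Fin t, (2 * cmax + lmax) * ∑ i, |S i - S' i| := by
        gcongr
        exact (Finset.abs_sum_le_sum_abs _ _).trans (Finset.sum_le_sum fun s _ =>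
          abs_Gcost_sub_le hc hcmax hl hlmax (hP s) S S' (d s))
    _ = (t / t : ℝ) * ((2 * cmax + lmax) * ∑ i, |S i - S' i|) := by simp; ring
    _ ≤ _ := mul_le_of_le_one_left hC (div_self_le_one _)

lemma measurable_Gcost (hc : ∀ i j, 0 ≤ c i j) (l : Fin n → Fin n → ℝ) (S : Fin n → ℝ) :
    Measurable fun p : (Fin n → ℝ) × (Fin n → Fin n → ℝ) => Gcost c l S p.1 p.2 := by
  unfold Gcost
  exact ((measurable_repoCost hc).comp (by fun_prop)).sub (by fun_prop)

end BaseStock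

section Hoeffding

variable {Ω ι : Type*} [MeasurableSpace Ω] {μ : Measure Ω} [IsProbabilityMeasure μ]
  [Fintype ι] [Nonempty ι]

lemma measureReal_sum_sub_integral_ge_le {X : ι → Ω → ℝ} (hindep : iIndepFun X μ)
    (hmeas : ∀ i, Measurable (X i)) {a b : ℝ} (hab : a < b) (hX : ∀ i ω, X i ω ∈ Set.Icc a b)
    {r : ℝ} (hr : 0 ≤ r) :
    μ.real {ω | (b - a) * r ≤ ∑ i, (X i ω - μ[X i])}
      ≤ Real.exp (-2 * r ^ 2 / Fintype.card ι) := by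
  have hsub : ∀ i, HasSubgaussianMGF (fun ω => X i ω - μ[X i]) ((‖b - a‖₊ / 2) ^ 2) μ :=
    fun i => hasSubgaussianMGF_of_mem_Icc (hmeas i).aemeasurable (ae_of_all _ (hX i))
  have hind := hindep.comp (fun i (x : ℝ) => x - μ[X i]) fun _ => measurable_id.sub_const _
  refine (HasSubgaussianMGF.measure_sum_ge_le_of_iIndepFun hind (s := Finset.univ)
    (fun i _ => hsub i) (by have := sub_pos.2 hab; positivity)).trans_eq ?_
  have hcard : (0 : ℝ) < Fintype.card ι := by exact_mod_cast Fintype.card_pos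
  push_cast
  rw [Real.norm_of_nonneg (sub_pos.2 hab).le, Finset.sum_const, Finset.card_univ, nsmul_eq_mul]
  have := (sub_pos.2 hab).ne'
  field_simp

/-- Two-sided Hoeffding inequality, with the deviation measured in units of the range `b - a`;
in this form it also holds for constant variables (`a = b`). -/
lemma measure_abs_sum_sub_integral_gt_le {X : ι → Ω → ℝ} (hindep : iIndepFun X μ)
    (hmeas : ∀ i, Measurable (X i)) {a b : ℝ} (hX : ∀ i ω, X i ω ∈ Set.Icc a b)
    {r : ℝ} (hr : 0 ≤ r) :
    μ {ω | (b - a) * r < |∑ i, (X i ω - μ[X i])|}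
      ≤ ENNReal.ofReal (2 * Real.exp (-2 * r ^ 2 / Fintype.card ι)) := by
  obtain hba | hab := le_or_gt b a
  · have hconst : ∀ i ω, X i ω = a := fun i ω =>
      le_antisymm ((hX i ω).2.trans hba) (hX i ω).1
    have hset : {ω | (b - a) * r < |∑ i, (X i ω - μ[X i])|} = ∅ := by
      refine Set.eq_empty_of_forall_notMem fun ω hω => ?_
      obtain ⟨i⟩ := ‹Nonempty ι›
      have hab : b = a := le_antisymm hba ((hX i ω).1.trans (hX i ω).2)
      simp [hconst, hab] at hω
    rw [hset, measure_empty]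
    exact zero_le
  have hneg := measureReal_sum_sub_integral_ge_le (X := fun i ω => -X i ω)
    (hindep.comp (fun _ (x : ℝ) => -x) fun _ => measurable_neg) (fun i => (hmeas i).neg)
    (neg_lt_neg hab) (fun i ω => ⟨neg_le_neg (hX i ω).2, neg_le_neg (hX i ω).1⟩) hr
  have hpos := measureReal_sum_sub_integral_ge_le hindep hmeas hab hX hr
  calc μ {ω | (b - a) * r < |∑ i, (X i ω - μ[X i])|}
      ≤ μ ({ω | (b - a) * r ≤ ∑ i, (X i ω - μ[X i])}
          ∪ {ω | (-a - -b) * r ≤ ∑ i, (-X i ω - μ[fun ω => -X i ω])}) := by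
        refine measure_mono fun ω hω => ?_
        rcases lt_abs.mp hω.out with h | h
        · exact Or.inl h.le
        · have hsum : ∑ i, (-X i ω - μ[fun ω => -X i ω]) = -∑ i, (X i ω - μ[X i]) := by
            simp only [integral_neg, ← Finset.sum_neg_distrib, neg_sub_neg, neg_sub]
          refine Or.inr (Set.mem_ofPred.mpr ?_)
          rw [hsum]
          linarith
    _ ≤ ENNReal.ofReal (2 * Real.exp (-2 * r ^ 2 / Fintype.card ι)) := by
        refine (measure_union_le _ _).trans ?_
        rw [← ofReal_measureReal, ← ofReal_measureReal, two_mul,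
          ENNReal.ofReal_add (by positivity) (by positivity)]
        gcongr

end Hoeffding

section Grid

variable {n : ℕ} [NeZero n]

noncomputable def gridPt (m : ℕ) (k : Fin n → ℕ) (i : Fin n) : ℝ :=
  k i / m + if i = 0 then 1 - ∑ j, (k j : ℝ) / m else 0

lemma sum_gridPt (m : ℕ) (k : Fin n → ℕ) : ∑ i, gridPt m k i = 1 := by
  simp [gridPt, Finset.sum_add_distrib]

lemma sub_floor_div_mem_Icc {m : ℕ} (hm : 0 < m) {s : ℝ} (hs : 0 ≤ s) :
    s - ⌊m * s⌋₊ / m ∈ Set.Icc (0 : ℝ) (1 / m) := by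
  have hm' : (0 : ℝ) < m := Nat.cast_pos.2 hm
  constructor
  · rw [sub_nonneg, div_le_iff₀ hm', mul_comm]
    exact Nat.floor_le (by positivity)
  · rw [sub_le_iff_le_add, ← add_div, le_div_iff₀ hm', mul_comm]
    linarith [Nat.lt_floor_add_one (m * s)]

/-- Rounding every coordinate down to the grid `ℕ / m` and putting the missing mass `ρ` on
coordinate `0` moves each coordinate by at most `1 / m`, plus `ρ ≤ n / m` on coordinate `0`. -/
lemma gridPt_floor_mem_and_sum_abs_sub_le {m : ℕ} (hm : 0 < m) {S : Fin n → ℝ}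
    (hS : S ∈ stdSimplex ℝ (Fin n)) :
    gridPt m (fun i => ⌊m * S i⌋₊) ∈ stdSimplex ℝ (Fin n) ∧
      ∑ i, |S i - gridPt m (fun i => ⌊m * S i⌋₊) i| ≤ 2 * n / m := by
  set e : Fin n → ℝ := fun i => S i - ⌊m * S i⌋₊ / m
  have he : ∀ i, e i ∈ Set.Icc (0 : ℝ) (1 / m) := fun i => sub_floor_div_mem_Icc hm (hS.1 i)
  have hρ : 1 - ∑ j, (⌊m * S j⌋₊ : ℝ) / m = ∑ j, e j := by
    simp only [e, Finset.sum_sub_distrib, hS.2]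
  have hρ0 : 0 ≤ ∑ j, e j := Finset.sum_nonneg fun j _ => (he j).1
  have hρn : ∑ j, e j ≤ n / m := by
    calc ∑ j, e j ≤ ∑ _j : Fin n, (1 / m : ℝ) := Finset.sum_le_sum fun j _ => (he j).2
      _ = n / m := by simp [div_eq_mul_inv]
  have hcoord : ∀ i, |S i - gridPt m (fun i => ⌊m * S i⌋₊) i|
      ≤ e i + if i = 0 then ∑ j, e j else 0 := by
    intro i
    simp only [gridPt, hρ]
    have := he i
    split_ifs <;> simp only [e] at this ⊢ <;> rw [abs_le] <;> constructor <;> linarith [this.1]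
  refine ⟨⟨fun i => ?_, sum_gridPt m _⟩, ?_⟩
  · simp only [gridPt, hρ]
    split_ifs <;> positivity
  · calc _ ≤ ∑ i, (e i + if i = 0 then ∑ j, e j else 0) := Finset.sum_le_sum fun i _ => hcoord i
      _ = 2 * ∑ j, e j := by simp [Finset.sum_add_distrib, two_mul]
      _ ≤ 2 * n / m := by rw [mul_div_assoc]; gcongr

lemma exists_finset_stdSimplex_net (m : ℕ) (hm : 0 < m) :
    ∃ N : Finset (Fin n → ℝ), (∀ S' ∈ N, S' ∈ stdSimplex ℝ (Fin n)) ∧ N.card ≤ (m + 1) ^ n ∧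
      ∀ S ∈ stdSimplex ℝ (Fin n), ∃ S' ∈ N, ∑ i, |S i - S' i| ≤ 2 * n / m := by
  classical
  refine ⟨(Finset.univ.image fun k : Fin n → Fin (m + 1) => gridPt m fun i => k i).filter
    (· ∈ stdSimplex ℝ (Fin n)), fun S' hS' => (Finset.mem_filter.1 hS').2, ?_, fun S hS => ?_⟩
  · refine (Finset.card_filter_le _ _).trans (Finset.card_image_le.trans ?_)
    simp
  · have hfloor : ∀ i, ⌊m * S i⌋₊ < m + 1 := fun i => by
      refine Nat.lt_succ_of_le (Nat.floor_le_of_le ?_)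
      calc (m : ℝ) * S i ≤ m * 1 := by gcongr; exact (mem_Icc_of_mem_stdSimplex hS i).2
        _ = m := mul_one _
    obtain ⟨hmem, hdist⟩ := gridPt_floor_mem_and_sum_abs_sub_le hm hS
    refine ⟨_, Finset.mem_filter.2 ⟨Finset.mem_image.2 ⟨fun i => ⟨_, hfloor i⟩, Finset.mem_univ _,
      rfl⟩, hmem⟩, hdist⟩

end Grid

lemma sSup_abs_le_of_net {n : ℕ} {f : (Fin n → ℝ) → ℝ} {N : Finset (Fin n → ℝ)} {K δ ε : ℝ}
    (hK : 0 ≤ K) (h0 : 0 ≤ ε + K * δ)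
    (hlip : ∀ S ∈ stdSimplex ℝ (Fin n), ∀ S' ∈ N, |f S - f S'| ≤ K * ∑ i, |S i - S' i|)
    (hnet : ∀ S ∈ stdSimplex ℝ (Fin n), ∃ S' ∈ N, ∑ i, |S i - S' i| ≤ δ)
    (hN : ∀ S' ∈ N, |f S'| ≤ ε) :
    sSup {r | ∃ S ∈ stdSimplex ℝ (Fin n), r = |f S|} ≤ ε + K * δ := by
  refine Real.sSup_le ?_ h0
  rintro _ ⟨S, hS, rfl⟩
  obtain ⟨S', hS'N, hSS'⟩ := hnet S hS
  have := abs_sub_abs_le_abs_sub (f S) (f S')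
  nlinarith [hlip S hS S' hS'N, hN S' hS'N]

lemma ofReal_one_sub_le_measure {Ω : Type*} [MeasurableSpace Ω] {μ : Measure Ω}
    [IsProbabilityMeasure μ] {s : Set Ω} {p : ℝ} (hp : 0 ≤ p) (h : μ sᶜ ≤ ENNReal.ofReal p) :
    ENNReal.ofReal (1 - p) ≤ μ s := by
  rw [ENNReal.ofReal_sub _ hp, ENNReal.ofReal_one, tsub_le_iff_right]
  calc 1 = μ Set.univ := measure_univ.symm
    _ ≤ μ s + μ sᶜ := measure_univ_le_add_compl s
    _ ≤ μ s + ENNReal.ofReal p := by gcongr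

section Sample

variable {Ω : Type*} [MeasurableSpace Ω] {μ : Measure Ω} [IsProbabilityMeasure μ] {n t : ℕ}
  [NeZero n] {c l : Fin n → Fin n → ℝ} {cmax lmax : ℝ}
  {d : Fin t → Ω → Fin n → ℝ} {P : Fin t → Ω → Fin n → Fin n → ℝ}

lemma abs_integral_Gcost_sub_le (hc : ∀ i j, 0 ≤ c i j) (hcmax : ∀ i j, c i j ≤ cmax)
    (hl : ∀ i j, 0 ≤ l i j) (hlmax : ∀ i j, l i j ≤ lmax) {d₀ : Ω → Fin n → ℝ}
    {P₀ : Ω → Fin n → Fin n → ℝ} (hmeas : Measurable fun ω => (d₀ ω, P₀ ω))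
    (hd : ∀ ω i, 0 ≤ d₀ ω i) (hP : ∀ ω, RowStochastic (P₀ ω)) {S S' : Fin n → ℝ}
    (hS : S ∈ stdSimplex ℝ (Fin n)) (hS' : S' ∈ stdSimplex ℝ (Fin n)) :
    |μ[fun ω => Gcost c l S (d₀ ω) (P₀ ω)] - μ[fun ω => Gcost c l S' (d₀ ω) (P₀ ω)]|
      ≤ (2 * cmax + lmax) * ∑ i, |S i - S' i| := by
  have hint : ∀ S ∈ stdSimplex ℝ (Fin n), Integrable (fun ω => Gcost c l S (d₀ ω) (P₀ ω)) μ :=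
    fun S hS => Integrable.of_mem_Icc _ _ ((measurable_Gcost hc l S).comp hmeas).aemeasurable
      (ae_of_all _ fun ω => Gcost_mem_Icc hc hcmax hl hlmax (hP ω) hS (hd ω))
  rw [← integral_sub (hint S hS) (hint S' hS'), ← Real.norm_eq_abs]
  simpa using norm_integral_le_of_norm_le_const (μ := μ)
    (ae_of_all _ fun ω => (Real.norm_eq_abs _).trans_le
      (abs_Gcost_sub_le hc hcmax hl hlmax (hP ω) S S' (d₀ ω)))

lemma measure_biUnion_lt_abs_sum_Gcost_sub_le [NeZero t] (hc : ∀ i j, 0 ≤ c i j)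
    (hcmax : ∀ i j, c i j ≤ cmax) (hl : ∀ i j, 0 ≤ l i j) (hlmax : ∀ i j, l i j ≤ lmax)
    (hmeas : ∀ s, Measurable fun ω => (d s ω, P s ω))
    (hindep : iIndepFun (fun s ω => (d s ω, P s ω)) μ) (hd : ∀ s ω i, 0 ≤ d s ω i)
    (hP : ∀ s ω, RowStochastic (P s ω)) {N : Finset (Fin n → ℝ)}
    (hN : ∀ S ∈ N, S ∈ stdSimplex ℝ (Fin n)) {r : ℝ} (hr : 0 ≤ r) :
    μ (⋃ S ∈ N, {ω | (2 * cmax + lmax) * r < |∑ s, (Gcost c l S (d s ω) (P s ω)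
        - μ[fun ω => Gcost c l S (d s ω) (P s ω)])|})
      ≤ N.card * ENNReal.ofReal (2 * Real.exp (-2 * r ^ 2 / t)) := by
  refine (measure_biUnion_finset_le _ _).trans ?_
  rw [← nsmul_eq_mul]
  refine Finset.sum_le_card_nsmul _ _ _ fun S hS => ?_
  have := measure_abs_sum_sub_integral_gt_le
    (hindep.comp (fun _ p => Gcost c l S p.1 p.2) fun _ => measurable_Gcost hc l S)
    (fun s => (measurable_Gcost hc l S).comp (hmeas s))
    (fun s ω => Gcost_mem_Icc hc hcmax hl hlmax (hP s ω) (hN S hS) (hd s ω)) hr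
  simpa only [sub_neg_eq_add, Fintype.card_fin, Function.comp_def] using this

lemma sSup_abs_mean_Gcost_sub_integral_le (hc : ∀ i j, 0 ≤ c i j)
    (hcmax : ∀ i j, c i j ≤ cmax) (hl : ∀ i j, 0 ≤ l i j) (hlmax : ∀ i j, l i j ≤ lmax)
    (s₀ : Fin t) (hmeas : Measurable fun ω => (d s₀ ω, P s₀ ω))
    (hident : ∀ s, IdentDistrib (fun ω => (d s ω, P s ω)) (fun ω => (d s₀ ω, P s₀ ω)) μ μ)
    (hd : ∀ ω i, 0 ≤ d s₀ ω i) (hP : ∀ s ω, RowStochastic (P s ω))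
    {N : Finset (Fin n → ℝ)} (hN : ∀ S ∈ N, S ∈ stdSimplex ℝ (Fin n)) {δ ε : ℝ} (hδ : 0 ≤ δ)
    (hε : 0 ≤ ε) (hnet : ∀ S ∈ stdSimplex ℝ (Fin n), ∃ S' ∈ N, ∑ i, |S i - S' i| ≤ δ) (ω : Ω)
    (hω : ∀ S ∈ N, |∑ s, (Gcost c l S (d s ω) (P s ω)
        - μ[fun ω => Gcost c l S (d s ω) (P s ω)])| ≤ ε) :
    sSup {r | ∃ S ∈ stdSimplex ℝ (Fin n), r = |(1 / t : ℝ) * (∑ s, Gcost c l S (d s ω) (P s ω))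
        - ∫ ω', Gcost c l S (d s₀ ω') (P s₀ ω') ∂μ|}
      ≤ ε / t + 2 * (2 * cmax + lmax) * δ := by
  have hL : 0 ≤ 2 * cmax + lmax := by
    linarith [(hc 0 0).trans (hcmax 0 0), (hl 0 0).trans (hlmax 0 0)]
  refine sSup_abs_le_of_net (by positivity) (by positivity) (fun S hS S' hS' => ?_) hnet
    fun S hS => ?_
  · have h1 := abs_mean_Gcost_sub_le (d := fun s => d s ω) hc hcmax hl hlmax (fun s => hP s ω) S S'
    have h2 := abs_integral_Gcost_sub_le (μ := μ) hc hcmax hl hlmax hmeas hd (hP s₀) hS (hN S' hS')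
    rw [abs_le] at h1 h2 ⊢
    constructor <;> linarith [h1.1, h1.2, h2.1, h2.2]
  · have ht : (0 : ℝ) < t := by exact_mod_cast s₀.pos
    have hmean : ∀ s, μ[fun ω => Gcost c l S (d s ω) (P s ω)]
        = ∫ ω', Gcost c l S (d s₀ ω') (P s₀ ω') ∂μ :=
      fun s => ((hident s).comp (measurable_Gcost hc l S)).integral_eq
    have hsum : (1 / t : ℝ) * (∑ s, Gcost c l S (d s ω) (P s ω))
        - ∫ ω', Gcost c l S (d s₀ ω') (P s₀ ω') ∂μ
        = (1 / t : ℝ) * ∑ s, (Gcost c l S (d s ω) (P s ω)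
          - μ[fun ω => Gcost c l S (d s ω) (P s ω)]) := by
      simp only [Finset.sum_sub_distrib, hmean, Finset.sum_const, Finset.card_univ,
        Fintype.card_fin, nsmul_eq_mul]
      field_simp
    rw [hsum, abs_mul, abs_of_nonneg (by positivity), one_div_mul_eq_div]
    exact div_le_div_of_nonneg_right (hω S hS) ht.le

end Sample

section Numerics

lemma add_one_pow_mul_sq_le_pow {n T : ℕ} (hn : 1 ≤ n) (hT : 2 ≤ T) :
    (n * T + 1) ^ n * T ^ 2 ≤ T ^ (8 * n ^ 2) := by
  have hnT : n * T + 1 ≤ T ^ (n + 1) := by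
    have : n + 1 ≤ T ^ n := (Nat.lt_two_pow_self).trans_le (Nat.pow_le_pow_left hT n)
    rw [pow_succ]
    nlinarith
  calc (n * T + 1) ^ n * T ^ 2 ≤ (T ^ (n + 1)) ^ n * T ^ 2 := by gcongr
    _ = T ^ ((n + 1) * n + 2) := by ring
    _ ≤ T ^ (8 * n ^ 2) := Nat.pow_le_pow_right (by omega) (by nlinarith)

lemma add_one_pow_mul_exp_le {n T : ℕ} (hn : 1 ≤ n) (hT : 2 ≤ T) :
    ((n * T + 1) ^ n : ℝ) * (2 * Real.exp (-(8 * n ^ 2 * Real.log T))) ≤ 3 / T ^ 2 := by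
  have hT0 : (0 : ℝ) < T := by positivity
  have hexp : Real.exp (8 * n ^ 2 * Real.log T) = (T ^ (8 * n ^ 2) : ℕ) := by
    rw [show (8 * n ^ 2 * Real.log T) = ((8 * n ^ 2 : ℕ) : ℝ) * Real.log T by push_cast; ring,
      Real.exp_nat_mul, Real.exp_log hT0]
    push_cast; ring
  have hcount : ((n * T + 1) ^ n * T ^ 2 : ℝ) ≤ (T ^ (8 * n ^ 2) : ℕ) := by
    exact_mod_cast add_one_pow_mul_sq_le_pow hn hT
  rw [Real.exp_neg, hexp, le_div_iff₀ (by positivity)]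
  have hpos : (0 : ℝ) < (T ^ (8 * n ^ 2) : ℕ) := by positivity
  calc _ = 2 * (((n * T + 1) ^ n * T ^ 2 : ℝ) / (T ^ (8 * n ^ 2) : ℕ)) := by ring
    _ ≤ 2 * 1 := by gcongr; exact (div_le_one hpos).2 hcount
    _ ≤ 3 := by norm_num

lemma card_mul_two_exp_le {n T t k : ℕ} (hn : 1 ≤ n) (hT : 2 ≤ T) (ht : 1 ≤ t)
    (hk : k ≤ (n * T + 1) ^ n) :
    (k : ENNReal) * ENNReal.ofReal (2 * Real.exp (-2 * (2 * n * √(Real.log T) * √t) ^ 2 / t))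
      ≤ ENNReal.ofReal (3 / T ^ 2) := by
  have hexp : -2 * (2 * n * √(Real.log T) * √t) ^ 2 / t = -(8 * n ^ 2 * Real.log T) := by
    rw [mul_pow, mul_pow, Real.sq_sqrt (Nat.cast_nonneg t),
      Real.sq_sqrt (Real.log_nonneg (Nat.one_le_cast.2 (by omega)))]
    have : (t : ℝ) ≠ 0 := by positivity
    field_simp
    ring
  rw [hexp, ← ENNReal.ofReal_natCast, ← ENNReal.ofReal_mul (by positivity)]
  refine ENNReal.ofReal_le_ofReal ((mul_le_mul_of_nonneg_right ?_ (by positivity)).trans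
    (add_one_pow_mul_exp_le hn hT))
  exact_mod_cast hk

lemma deviation_bound_le {n T t : ℕ} (hn : 1 ≤ n) (hT : 2 ≤ T) (ht : 1 ≤ t) (htT : t ≤ T)
    {L B : ℝ} (hL : 0 ≤ L) (hLB : L ≤ 2 * B) :
    L * (2 * n * √(Real.log T) * √t) / t + 2 * L * (2 * n / (n * T : ℕ))
      ≤ 40 * n ^ 3 * B * √(Real.log T) / √t := by
  have hn' : (1 : ℝ) ≤ n := by exact_mod_cast hn
  have ht' : (1 : ℝ) ≤ t := by exact_mod_cast ht
  have hT' : (t : ℝ) ≤ T := by exact_mod_cast htT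
  have hst : 0 < √(t : ℝ) := Real.sqrt_pos.2 (by linarith)
  have hhalf : 1 / 2 ≤ √(Real.log T) := by
    rw [Real.le_sqrt (by norm_num) (Real.log_nonneg (by exact_mod_cast (by omega : 1 ≤ T)))]
    have := Real.log_two_gt_d9
    have : Real.log 2 ≤ Real.log T := Real.log_le_log (by norm_num) (by exact_mod_cast hT)
    linarith
  have hinvT : 1 / (T : ℝ) ≤ 2 * (√(Real.log T) / √t) := by
    have hsqrt_le : √(t : ℝ) ≤ T := (Real.sqrt_le_iff.2 ⟨by linarith, by nlinarith⟩).trans hT'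
    calc 1 / (T : ℝ) ≤ 1 / √t := one_div_le_one_div_of_le hst hsqrt_le
      _ ≤ (2 * √(Real.log T)) / √t := div_le_div_of_nonneg_right (by linarith) hst.le
      _ = _ := by ring
  have h1 : L * (2 * n * √(Real.log T) * √t) / t = 2 * n * L * (√(Real.log T) / √t) := by
    field_simp
    rw [Real.sq_sqrt (by linarith)]
  have h2 : 2 * L * (2 * n / (n * T : ℕ)) = 4 * L * (1 / T) := by
    push_cast
    field_simp
    ring
  have hn3 : (n : ℝ) ≤ n ^ 3 := le_self_pow₀ hn' (by norm_num)
  rw [h1, h2, show 40 * (n : ℝ) ^ 3 * B * √(Real.log T) / √t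
    = 40 * n ^ 3 * B * (√(Real.log T) / √t) by ring]
  have hx : 0 ≤ √(Real.log T) / √t := by positivity
  nlinarith [mul_le_mul_of_nonneg_left hinvT (by linarith : 0 ≤ 4 * L),
    mul_nonneg hx hL, mul_nonneg hx (by linarith : (0 : ℝ) ≤ 2 * B - L)]

end Numerics

theorem stmt11 (n T t : ℕ) (hn : 1 ≤ n) (ht : 1 ≤ t) (htT : t ≤ T)
    (c l : Fin n → Fin n → ℝ)
    (hc : ∀ i j, 0 ≤ c i j) (hl : ∀ i j, 0 ≤ l i j)
    (cmax lmax : ℝ)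
    (hcmax : IsGreatest {x : ℝ | ∃ i j, x = c i j} cmax)
    (hlmax : IsGreatest {x : ℝ | ∃ i j, x = l i j} lmax)
    {Ω : Type*} [MeasurableSpace Ω] (μ : Measure Ω) [IsProbabilityMeasure μ]
    (d : Fin t → Ω → Fin n → ℝ) (P : Fin t → Ω → Fin n → Fin n → ℝ)
    (hmeas : ∀ s, Measurable (fun ω => (d s ω, P s ω)))
    (hindep : iIndepFun (fun s ω => (d s ω, P s ω)) μ)
    (hident : ∀ s s' : Fin t,
      IdentDistrib (fun ω => (d s ω, P s ω)) (fun ω => (d s' ω, P s' ω)) μ μ)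
    (hdval : ∀ s ω i, d s ω i ∈ Set.Icc (0 : ℝ) 1)
    (hPval : ∀ s ω, RowStochastic (P s ω)) :
    ENNReal.ofReal (1 - 3 / (T : ℝ) ^ 2) ≤
      μ {ω | sSup {r : ℝ | ∃ S ∈ stdSimplex ℝ (Fin n),
          r = |(1 / t : ℝ) * (∑ s, Gcost c l S (d s ω) (P s ω))
                - ∫ ω', Gcost c l S (d ⟨0, ht⟩ ω') (P ⟨0, ht⟩ ω') ∂μ|}
        ≤ 40 * (n : ℝ) ^ 3 * (cmax + lmax) * Real.sqrt (Real.log T) / Real.sqrt t} := by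
  obtain hT | hT := lt_or_ge T 2
  · refine (ENNReal.ofReal_of_nonpos ?_).trans_le zero_le
    rw [show T = 1 by omega]
    norm_num
  have : NeZero n := ⟨by omega⟩
  have : NeZero t := ⟨by omega⟩
  have hcub : ∀ i j, c i j ≤ cmax := fun i j => hcmax.2 ⟨i, j, rfl⟩
  have hlub : ∀ i j, l i j ≤ lmax := fun i j => hlmax.2 ⟨i, j, rfl⟩
  have hd : ∀ s ω i, 0 ≤ d s ω i := fun s ω i => (hdval s ω i).1
  have hcm := (hc 0 0).trans (hcub 0 0)
  have hlm := (hl 0 0).trans (hlub 0 0)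
  obtain ⟨N, hNsub, hNcard, hnet⟩ := exists_finset_stdSimplex_net (n := n) (n * T) (by positivity)
  refine ofReal_one_sub_le_measure (by positivity) ((measure_mono fun ω hω => ?_).trans
    ((measure_biUnion_lt_abs_sum_Gcost_sub_le hc hcub hl hlub hmeas hindep hd hPval hNsub
      (r := 2 * n * √(Real.log T) * √t) (by positivity)).trans
        (card_mul_two_exp_le hn hT ht hNcard)))
  by_contra hgood
  refine hω (Set.mem_ofPred.2 ?_)
  simp only [Set.mem_iUnion, Set.mem_ofPred_eq, not_exists, not_lt] at hgood
  exact (sSup_abs_mean_Gcost_sub_integral_le hc hcub hl hlub ⟨0, ht⟩ (hmeas _)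
    (fun s => hident s _) (hd _) hPval hNsub (by positivity) (by positivity) hnet ω hgood).trans
    (deviation_bound_le hn hT ht htT (by positivity) (by linarith))
end
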